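/- For every complex number z not in ℤ, the limit as N → ∞ of the symmetric partial sums ∑_{k=-N}^{N} 1/(z+k) equals π·cot(πz). -/

import Mathlib

/-!
Logarithmic differentiation of Euler's product `sin (π z) = π z ∏ (1 - z² / n²)`, which converges
locally uniformly off `ℤ`, gives
`π cot (π z) - 1 / z = lim_N ∑_{n < N} (1 / (z - (n + 1)) + 1 / (z + (n + 1)))`
(`tendsto_logDeriv_euler_cot_sub`). Pairing the terms `k` and `-k` of the symmetric sum turns it into
`1 / z` plus exactly these partial sums.
-/

open Complex Filter Finset

namespace Finset

@[to_additive]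
lemma prod_Icc_neg_eq_mul_prod_range {M : Type*} [CommMonoid M] (f : ℤ → M) (N : ℕ) :
    ∏ k ∈ Icc (-(N : ℤ)) N, f k = f 0 * ∏ i ∈ range N, (f (-(i + 1)) * f (i + 1)) := by
  induction N with
  | zero => simp
  | succ N ih =>
    rw [Nat.cast_add, Nat.cast_one, Icc_succ_succ, prod_union (by simp), prod_pair (by lia), ih,
      prod_range_succ, mul_assoc]

end Finset

/-- For every complex number `z` not in `ℤ`, the symmetric partial sums
`∑_{k=-N}^{N} 1/(z+k)` tend to `π · cot (π z)` as `N → ∞`. -/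
theorem symmetric_sum_tendsto_pi_cot (z : ℂ) (hz : ∀ k : ℤ, z ≠ (k : ℂ)) :
    Tendsto (fun N : ℕ => ∑ k ∈ Finset.Icc (-(N : ℤ)) (N : ℤ), 1 / (z + (k : ℂ)))
      atTop (nhds (↑Real.pi * Complex.cot (↑Real.pi * z))) := by
  have hz' : z ∈ integerComplement := by
    rintro ⟨k, rfl⟩
    exact hz k rfl
  have h := (tendsto_logDeriv_euler_cot_sub hz').const_add (1 / z)
  rw [add_sub_cancel] at h
  refine h.congr fun N => ?_
  rw [sum_Icc_neg_eq_add_sum_range]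
  simp [cotTerm, sub_eq_add_neg, add_comm]
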